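/- Let R ⊆ List (ℕ × Bool) be a recursively enumerable set of words and let A ⊆ ℕ be recursively enumerable; write G := PresentedGroup (FreeGroup.mk '' R). Then there exists a recursively enumerable set of words R' ⊆ List (ℕ × Bool) with R ⊆ R' such that the normal closure of FreeGroup.mk '' R' in FreeGroup ℕ equals the kernel of the composite homomorphism FreeGroup ℕ → G → G/tor^A_ω(G); consequently the universal A-torsion-free quotient G/tor^A_ω(G) is isomorphic to PresentedGroup (FreeGroup.mk '' R'), i.e. it is recursively presented on the same generators. -/

import Mathlib

/-!
`tor^A_ω(G)` is the least normal subgroup `N` of `G` closed under `A`-th roots (`g ^ k ∈ N` with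
`k ∈ A` forces `g ∈ N`), i.e. the least one for which `G ⧸ N` has no `A`-torsion. Pulled back to
the free group, the kernel of `FreeGroup ℕ → G ⧸ tor^A_ω(G)` is therefore the least normal subgroup
that contains the relators `R` and is closed under `A`-th roots. Its elements are exactly the words
derivable from `R` by finitely many steps (products, inverses, conjugates, `A`-th roots). Each
step can be checked by comparing reduced words and enumerating `R` and `A`, so a derivation is a
finite certificate and the derivable words form an r.e. set `R'`.
-/

/-- The `X`-torsion of a group `G`: elements `g` with `g ^ n = 1` for some `n ∈ X`. -/
def xTorsion (X : Set ℕ) (G : Type*) [Group G] : Set G := {g | ∃ n ∈ X, g ^ n = 1}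

/-- A group is `X`-torsion-free if its `X`-torsion consists only of the identity. -/
def IsXTorsionFree (X : Set ℕ) (G : Type*) [Group G] : Prop := xTorsion X G = {1}

/-- The set of orders (≥ 2) of torsion elements of `G`. -/
def torord (G : Type*) [Group G] : Set ℕ := {n | 2 ≤ n ∧ ∃ g : G, orderOf g = n}

/-- One step of the `X`-torsion annihilation: the normal closure of the set of elements
whose image in `G ⧸ N` is `X`-torsion (i.e. `g ^ n ∈ N` for some `n ∈ X`). -/
def torStep (X : Set ℕ) {G : Type*} [Group G] (N : Subgroup G) : Subgroup G :=
  Subgroup.normalClosure {g : G | ∃ n ∈ X, g ^ n ∈ N}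

/-- `torX X G n` is `tor^X_n(G)`. -/
def torX (X : Set ℕ) (G : Type*) [Group G] : ℕ → Subgroup G
  | 0 => ⊥
  | n + 1 => torStep X (torX X G n)

lemma torStep_mono (X : Set ℕ) {G : Type*} [Group G] {N M : Subgroup G} (h : N ≤ M) :
    torStep X N ≤ torStep X M :=
  Subgroup.normalClosure_mono (fun g hg => by
    obtain ⟨n, hn, hgn⟩ := hg; exact ⟨n, hn, h hgn⟩)

lemma torX_le_succ (X : Set ℕ) (G : Type*) [Group G] (n : ℕ) :
    torX X G n ≤ torX X G (n + 1) := by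
  induction n with
  | zero => exact bot_le
  | succ n ih => exact torStep_mono X ih

lemma torX_mono (X : Set ℕ) (G : Type*) [Group G] : Monotone (torX X G) :=
  monotone_nat_of_le_succ (torX_le_succ X G)

/-- `tor^X_ω(G) = ⋃_n tor^X_n(G)`, as a subgroup of `G`. -/
def torOmega (X : Set ℕ) (G : Type*) [Group G] : Subgroup G where
  carrier := ⋃ n, (torX X G n : Set G)
  one_mem' := Set.mem_iUnion.mpr ⟨0, Subgroup.one_mem _⟩
  mul_mem' := by
    intro a b ha hb
    obtain ⟨m, hm⟩ := Set.mem_iUnion.mp ha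
    obtain ⟨n, hn⟩ := Set.mem_iUnion.mp hb
    exact Set.mem_iUnion.mpr ⟨max m n, Subgroup.mul_mem _
      (torX_mono X G (le_max_left m n) hm) (torX_mono X G (le_max_right m n) hn)⟩
  inv_mem' := by
    intro a ha
    obtain ⟨m, hm⟩ := Set.mem_iUnion.mp ha
    exact Set.mem_iUnion.mpr ⟨m, Subgroup.inv_mem _ hm⟩

instance torX_normal (X : Set ℕ) (G : Type*) [Group G] (n : ℕ) : (torX X G n).Normal := by
  cases n with
  | zero => exact inferInstanceAs (⊥ : Subgroup G).Normal
  | succ n => exact inferInstanceAs (Subgroup.normalClosure _).Normal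

instance torOmega_normal (X : Set ℕ) (G : Type*) [Group G] : (torOmega X G).Normal := by
  constructor
  intro a ha g
  obtain ⟨m, hm⟩ := Set.mem_iUnion.mp ha
  exact Set.mem_iUnion.mpr ⟨m, (torX_normal X G m).conj_mem a hm g⟩

/-- A predicate on a primcodable type is recursively enumerable if it is the domain of a
partial computable function. -/
def REPredOld {α : Type*} [Primcodable α] (p : α → Prop) : Prop :=
  Partrec (fun a => Part.assert (p a) (fun _ => Part.some ()))

/-- A group is finitely presented if it is isomorphic to the group of a finite presentation. -/
def IsFinitelyPresented (G : Type*) [Group G] : Prop :=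
  ∃ (n : ℕ) (rels : Set (FreeGroup (Fin n))), rels.Finite ∧ Nonempty (G ≃* PresentedGroup rels)

section REPred

open Encodable Primrec

variable {α β : Type*} [Primcodable α] [Primcodable β]

theorem Primrec.list_mem : PrimrecRel fun (a : α) (l : List α) => a ∈ l :=
  ((PrimrecRel.exists_mem_list Primrec.eq).comp snd fst).of_eq fun _ => by simp

theorem REPred.of_primrecPred {p : α → Prop} (hp : PrimrecPred p) : REPred p :=
  hp.computablePred.to_re

theorem REPred.comp {p : β → Prop} (hp : REPred p) {f : α → β} (hf : Computable f) :
    REPred fun a => p (f a) :=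
  Partrec.comp hp hf

theorem REPred.exists_of_primrecRel {q : α → β → Prop} (hq : PrimrecRel q) :
    REPred fun a => ∃ b, q a b := by
  classical
  let test (a : α) (n : ℕ) : Bool := ((decode (α := β) n).map fun b => decide (q a b)).getD false
  have htest : Primrec₂ test :=
    option_getD.comp
      (option_map (Primrec.decode.comp snd) (hq.decide.comp (fst.comp fst) snd).to₂)
      (const false)
  have hsearch := Partrec.rfind (p := fun a n => Part.some (test a n)) htest.to_comp.partrec₂
  refine hsearch.dom_re.of_eq fun a => Nat.rfind_dom.trans ⟨?_, ?_⟩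
  · rintro ⟨n, hn, -⟩
    cases hd : decode (α := β) n with
    | none => simp [test, hd] at hn
    | some b => exact ⟨b, by simpa [test, hd] using hn⟩
  · rintro ⟨b, hb⟩
    exact ⟨encode b, by simpa [test] using hb, fun _ => trivial⟩

/-- Kleene normal form: `p a` holds iff the program enumerating `p` halts on `a` within some
number `n` of steps. -/
theorem REPred.exists_primrecRel {p : α → Prop} (hp : REPred p) :
    ∃ q : α → ℕ → Prop, PrimrecRel q ∧ ∀ a, p a ↔ ∃ n, q a n := by
  obtain ⟨c, hc⟩ := Nat.Partrec.Code.exists_code.1 hp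
  refine ⟨fun a n => (Nat.Partrec.Code.evaln n c (encode a)).isSome, ?_, fun a => ?_⟩
  · refine Primrec.primrecPred ((option_isSome.comp (Nat.Partrec.Code.primrec_evaln.comp
      ((snd.pair (const c)).pair (Primrec.encode.comp fst)))).of_eq fun _ => by simp)
  · have hdom : p a ↔ (Nat.Partrec.Code.eval c (encode a)).Dom := by
      simp [hc, encodek, Part.assert]
    simp only [hdom, Part.dom_iff_mem, Nat.Partrec.Code.evaln_complete, Option.isSome_iff_exists]
    exact ⟨fun ⟨x, k, hk⟩ => ⟨k, x, hk⟩, fun ⟨k, x, hk⟩ => ⟨x, k, hk⟩⟩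

theorem REPred.and {p q : α → Prop} (hp : REPred p) (hq : REPred q) :
    REPred fun a => p a ∧ q a := by
  obtain ⟨p', hp', hp⟩ := hp.exists_primrecRel
  obtain ⟨q', hq', hq⟩ := hq.exists_primrecRel
  refine (exists_of_primrecRel (q := fun a (n : ℕ × ℕ) => p' a n.1 ∧ q' a n.2)
    ((hp'.comp fst (fst.comp snd)).and (hq'.comp fst (snd.comp snd)))).of_eq fun a => ?_
  simp only [hp, hq, Prod.exists, exists_and_left, exists_and_right]

theorem REPred.or {p q : α → Prop} (hp : REPred p) (hq : REPred q) :
    REPred fun a => p a ∨ q a := by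
  obtain ⟨p', hp', hp⟩ := hp.exists_primrecRel
  obtain ⟨q', hq', hq⟩ := hq.exists_primrecRel
  refine (exists_of_primrecRel (hp'.or hq').primrecRel).of_eq fun a => ?_
  simp only [hp, hq, exists_or]

theorem REPred.exists {q : α → β → Prop} (hq : REPred fun x : α × β => q x.1 x.2) :
    REPred fun a => ∃ b, q a b := by
  obtain ⟨r, hr, hq⟩ := hq.exists_primrecRel
  refine (exists_of_primrecRel (q := fun a (y : β × ℕ) => r (a, y.1) y.2)
    (hr.comp (fst.pair (fst.comp snd)) (snd.comp snd))).of_eq fun a => ?_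
  simp only [Prod.exists, ← hq]

theorem REPred.forall_mem_list {p : α → Prop} (hp : REPred p) :
    REPred fun l : List α => ∀ a ∈ l, p a := by
  obtain ⟨q, hq, hp⟩ := hp.exists_primrecRel
  -- one search bound `N` has to serve all members of the list at once
  have hbounded : PrimrecRel fun (l : List α) (N : ℕ) => ∀ a ∈ l, ∃ n ∈ List.range N, q a n :=
    PrimrecRel.forall_mem_list ((hq.comp snd fst).primrecRel.exists_mem_list.comp
      (list_range.comp snd) fst).primrecRel
  refine (exists_of_primrecRel hbounded).of_eq fun l => ?_
  simp only [hp, List.mem_range]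
  constructor
  · rintro ⟨N, hN⟩ a ha
    obtain ⟨n, -, hn⟩ := hN a ha
    exact ⟨n, hn⟩
  · intro h
    induction l with
    | nil => exact ⟨0, by simp⟩
    | cons a l ih =>
      obtain ⟨n, hn⟩ := h a List.mem_cons_self
      obtain ⟨N, hN⟩ := ih fun b hb => h b (List.mem_cons_of_mem a hb)
      refine ⟨max (n + 1) N, fun b hb => ?_⟩
      rcases List.mem_cons.1 hb with rfl | hb
      · exact ⟨n, by omega, hn⟩
      · obtain ⟨m, hm, hqm⟩ := hN b hb
        exact ⟨m, by omega, hqm⟩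

end REPred

/-- The least predicate closed under the rules `rule ps c`, read "from all of `ps`, infer `c`". -/
inductive Derivable {α : Type*} (rule : List α → α → Prop) : α → Prop
  | intro {ps : List α} {c : α} : rule ps c → (∀ p ∈ ps, Derivable rule p) → Derivable rule c

namespace Derivable

variable {α : Type*} {rule : List α → α → Prop}

/-- Steps `(premises, conclusion)`, listed last step first: the premises of each step must be
concluded further down the list. -/
def PremisesInTail : List (List α × α) → Prop
  | [] => True
  | (ps, _) :: l => (∀ p ∈ ps, p ∈ l.map Prod.snd) ∧ PremisesInTail l

variable (rule) in
def IsDerivation (l : List (List α × α)) : Prop :=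
  PremisesInTail l ∧ ∀ e ∈ l, rule e.1 e.2

theorem IsDerivation.append {l₁ l₂ : List (List α × α)} (h₁ : IsDerivation rule l₁)
    (h₂ : IsDerivation rule l₂) : IsDerivation rule (l₁ ++ l₂) := by
  refine ⟨?_, by simpa [or_imp, forall_and] using And.intro h₁.2 h₂.2⟩
  obtain ⟨h₁, -⟩ := h₁
  induction l₁ with
  | nil => exact h₂.1
  | cons e l ih => exact ⟨fun p hp => by simpa using Or.inl (h₁.1 p hp), ih h₁.2⟩

theorem of_isDerivation {l : List (List α × α)} (hl : IsDerivation rule l) :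
    ∀ c ∈ l.map Prod.snd, Derivable rule c := by
  obtain ⟨hl, hrule⟩ := hl
  induction l with
  | nil => simp
  | cons e l ih =>
    have hder := ih hl.2 fun e' he' => hrule e' (List.mem_cons_of_mem e he')
    rintro c (_ | ⟨_, hc⟩)
    · exact intro (hrule e List.mem_cons_self) fun p hp => hder p (hl.1 p hp)
    · exact hder c hc

theorem exists_isDerivation_forall_mem {ps : List α}
    (h : ∀ p ∈ ps, ∃ l, IsDerivation rule l ∧ p ∈ l.map Prod.snd) :
    ∃ l, IsDerivation rule l ∧ ∀ p ∈ ps, p ∈ l.map Prod.snd := by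
  induction ps with
  | nil => exact ⟨[], ⟨trivial, by simp⟩, by simp⟩
  | cons p ps ih =>
    obtain ⟨l₁, hl₁, hp⟩ := h p List.mem_cons_self
    obtain ⟨l₂, hl₂, hps⟩ := ih fun q hq => h q (List.mem_cons_of_mem p hq)
    refine ⟨l₁ ++ l₂, hl₁.append hl₂, ?_⟩
    simp only [List.map_append, List.forall_mem_cons, List.mem_append]
    exact ⟨Or.inl hp, fun q hq => Or.inr (hps q hq)⟩

theorem exists_isDerivation {c : α} (hc : Derivable rule c) :
    ∃ l, IsDerivation rule l ∧ c ∈ l.map Prod.snd := by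
  induction hc with
  | @intro ps c hps _ ih =>
    obtain ⟨l, ⟨hl, hrule⟩, hmem⟩ := exists_isDerivation_forall_mem ih
    exact ⟨(ps, c) :: l, ⟨⟨hmem, hl⟩, List.forall_mem_cons.2 ⟨hps, hrule⟩⟩, by simp⟩

theorem iff_exists_isDerivation {c : α} :
    Derivable rule c ↔ ∃ l, IsDerivation rule l ∧ c ∈ l.map Prod.snd :=
  ⟨exists_isDerivation, fun ⟨_, hl, hc⟩ => of_isDerivation hl c hc⟩

section Computability

open Primrec

variable [Primcodable α]

theorem primrecPred_premisesInTail : PrimrecPred (PremisesInTail (α := α)) := by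
  classical
  let check (l : List (List α × α)) : Bool :=
    List.recOn l true fun e l ih => decide (∀ p ∈ e.1, p ∈ l.map Prod.snd) && ih
  have hcheck : Primrec check :=
    list_rec Primrec.id (const true) <| to₂ <| Primrec.and.comp
      (list_mem.forall_mem_list.decide.comp (fst.comp (fst.comp snd))
        (list_map (fst.comp (snd.comp snd)) (snd.comp snd).to₂))
      (snd.comp (snd.comp snd))
  refine Primrec.primrecPred (hcheck.of_eq fun l => ?_)
  induction l with
  | nil => exact (decide_eq_true (p := PremisesInTail []) trivial).symm
  | cons e l ih => simp [check, PremisesInTail, ← ih]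

theorem rePred (hrule : REPred fun x : List α × α => rule x.1 x.2) : REPred (Derivable rule) := by
  show REPred fun c => Derivable rule c
  simp only [iff_exists_isDerivation, IsDerivation]
  exact .exists <| .and (.and (.of_primrecPred (primrecPred_premisesInTail.comp snd))
    (hrule.forall_mem_list.comp Computable.snd))
    (.of_primrecPred (list_mem.comp fst (list_map snd (snd.comp snd).to₂)))

end Computability

end Derivable

namespace Subgroup

variable {G H : Type*} [Group G] [Group H] (A : Set ℕ)

/-- For normal `N`, this says that `G ⧸ N` has no `A`-torsion. -/
def IsRootClosed (N : Subgroup G) : Prop :=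
  ∀ g : G, ∀ k ∈ A, g ^ k ∈ N → g ∈ N

variable {A}

theorem IsRootClosed.comap {N : Subgroup G} (hN : N.IsRootClosed A) (f : H →* G) :
    (N.comap f).IsRootClosed A :=
  fun g k hk hg => hN (f g) k hk (by simpa using hg)

theorem IsRootClosed.map {M : Subgroup H} (hM : M.IsRootClosed A) {f : H →* G}
    (hf : Function.Surjective f) (hker : f.ker ≤ M) : (M.map f).IsRootClosed A := by
  intro g k hk hg
  obtain ⟨x, rfl⟩ := hf g
  rw [← map_pow, ← mem_comap, comap_map_eq_self hker] at hg
  exact mem_map_of_mem f (hM x k hk hg)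

end Subgroup

open Subgroup

section torOmega

variable {A : Set ℕ} {G H : Type*} [Group G] [Group H]

theorem mem_torOmega {g : G} : g ∈ torOmega A G ↔ ∃ n, g ∈ torX A G n :=
  Set.mem_iUnion

theorem isRootClosed_torOmega : (torOmega A G).IsRootClosed A := by
  intro g k hk hg
  obtain ⟨n, hn⟩ := mem_torOmega.1 hg
  exact mem_torOmega.2 ⟨n + 1, subset_normalClosure ⟨k, hk, hn⟩⟩

theorem torOmega_le_of_isRootClosed {N : Subgroup G} [N.Normal] (hN : N.IsRootClosed A) :
    torOmega A G ≤ N := by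
  suffices ∀ n, torX A G n ≤ N from fun g hg => (mem_torOmega.1 hg).elim fun n hn => this n hn
  intro n
  induction n with
  | zero => exact bot_le
  | succ n ih => exact normalClosure_le_normal fun g ⟨k, hk, hg⟩ => hN g k hk (ih hg)

theorem comap_torOmega_le {f : H →* G} (hf : Function.Surjective f) {M : Subgroup H} [M.Normal]
    (hM : M.IsRootClosed A) (hker : f.ker ≤ M) : (torOmega A G).comap f ≤ M := by
  have : (M.map f).Normal := Normal.map inferInstance f hf
  rw [← comap_map_eq_self hker]
  exact comap_mono (torOmega_le_of_isRootClosed (hM.map hf hker))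

end torOmega

namespace FreeGroup

section Computability

open Primrec

variable {α : Type*} [Primcodable α]

theorem primrec_invRev : Primrec (invRev : List (α × Bool) → List (α × Bool)) :=
  list_reverse.comp <| list_map Primrec.id <| to₂ <|
    (fst.comp snd).pair ((dom_bool not).comp (snd.comp snd))

variable [DecidableEq α]

theorem primrec_reduce : Primrec (reduce : List (α × Bool) → List (α × Bool)) := by
  have hcancel : PrimrecPred fun x : (α × Bool) × (α × Bool) => x.1.1 = x.2.1 ∧ x.1.2 = !x.2.2 :=
    (Primrec.eq.comp (fst.comp fst) (fst.comp snd)).and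
      (Primrec.eq.comp (snd.comp fst) ((dom_bool not).comp (snd.comp snd)))
  have hstep : Primrec₂ fun (_ : List (α × Bool))
      (y : (α × Bool) × List (α × Bool) × List (α × Bool)) =>
      List.casesOn (motive := fun _ => List (α × Bool)) y.2.2 [y.1] fun hd tl =>
        if y.1.1 = hd.1 ∧ y.1.2 = !hd.2 then tl else y.1 :: hd :: tl :=
    to₂ <| list_casesOn (snd.comp (snd.comp snd)) (list_cons.comp (fst.comp snd) (const [])) <|
      to₂ <| Primrec.ite (hcancel.comp ((fst.comp (snd.comp fst)).pair (fst.comp snd)))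
        (snd.comp snd)
        (list_cons.comp (fst.comp (snd.comp fst)) (list_cons.comp (fst.comp snd) (snd.comp snd)))
  exact (list_rec Primrec.id (const []) hstep).of_eq fun _ => rfl

theorem primrecPred_mk_eq {β : Type*} [Primcodable β] {f g : β → List (α × Bool)}
    (hf : Primrec f) (hg : Primrec g) : PrimrecPred fun b => mk (f b) = mk (g b) :=
  (Primrec.eq.comp (primrec_reduce.comp hf) (primrec_reduce.comp hg)).of_eq fun b => by
    rw [← toWord_mk, ← toWord_mk, toWord_injective.eq_iff]

end Computability

variable {α : Type*} (R : Set (List (α × Bool))) (A : Set ℕ)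

inductive KernelRule : List (List (α × Bool)) → List (α × Bool) → Prop
  | rel {w} : w ∈ R → KernelRule [] w
  | one {w} : mk w = 1 → KernelRule [] w
  | mul {u v w} : mk w = mk u * mk v → KernelRule [u, v] w
  | inv {u w} : mk w = (mk u)⁻¹ → KernelRule [u] w
  | conj {u w} (g : List (α × Bool)) : mk w = mk g * mk u * (mk g)⁻¹ → KernelRule [u] w
  | root {u w k} : k ∈ A → mk u = mk w ^ k → KernelRule [u] w

variable {R A}

theorem kernelRule_iff {ps : List (List (α × Bool))} {w : List (α × Bool)} :
    KernelRule R A ps w ↔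
      (ps = [] ∧ w ∈ R) ∨ (ps = [] ∧ mk w = 1) ∨
      (∃ p : List (α × Bool) × List (α × Bool), ps = [p.1, p.2] ∧ mk w = mk p.1 * mk p.2) ∨
      (∃ u, ps = [u] ∧ mk w = (mk u)⁻¹) ∨
      (∃ p : List (α × Bool) × List (α × Bool),
        ps = [p.1] ∧ mk w = mk p.2 * mk p.1 * (mk p.2)⁻¹) ∨
      ∃ p : List (α × Bool) × ℕ, p.2 ∈ A ∧ ps = [p.1] ∧ mk p.1 = mk w ^ p.2 := by
  constructor
  · rintro (hw | hw | hw | hw | ⟨g, hw⟩ | ⟨hk, hw⟩)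
    exacts [.inl ⟨rfl, hw⟩, .inr (.inl ⟨rfl, hw⟩), .inr (.inr (.inl ⟨(_, _), rfl, hw⟩)),
      .inr (.inr (.inr (.inl ⟨_, rfl, hw⟩))), .inr (.inr (.inr (.inr (.inl ⟨(_, g), rfl, hw⟩)))),
      .inr (.inr (.inr (.inr (.inr ⟨(_, _), hk, rfl, hw⟩))))]
  · rintro (⟨rfl, hw⟩ | ⟨rfl, hw⟩ | ⟨⟨u, v⟩, rfl, hw⟩ | ⟨u, rfl, hw⟩ | ⟨⟨u, g⟩, rfl, hw⟩ |
      ⟨⟨u, k⟩, hk, rfl, hw⟩)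
    exacts [.rel hw, .one hw, .mul hw, .inv hw, .conj g hw, .root hk hw]

open Primrec in
theorem rePred_kernelRule [Primcodable α] [DecidableEq α] (hR : REPred (· ∈ R))
    (hA : REPred (· ∈ A)) :
    REPred fun x : List (List (α × Bool)) × List (α × Bool) => KernelRule R A x.1 x.2 := by
  have hnil : PrimrecPred fun x : List (List (α × Bool)) × List (α × Bool) => x.1 = [] :=
    Primrec.eq.comp fst (const [])
  have hpow : Primrec fun y : List (α × Bool) × ℕ => (List.replicate y.2 y.1).flatten :=
    (list_flatten.comp (list_map (list_range.comp snd) (fst.comp fst).to₂)).of_eq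
      fun y => by simp [List.map_const']
  simp only [kernelRule_iff]
  refine .or ((REPred.of_primrecPred hnil).and (hR.comp Computable.snd)) <| .or
    (.of_primrecPred (hnil.and ((primrecPred_mk_eq snd (const [])).of_eq
      fun _ => by rw [← one_eq_mk]))) <| .or ?_ <| .or ?_ <| .or ?_ ?_
  · refine REPred.exists_of_primrecRel (PrimrecPred.and ?_ ?_)
    · exact Primrec.eq.comp (fst.comp fst)
        (list_cons.comp (fst.comp snd) (list_cons.comp (snd.comp snd) (const [])))
    · exact (primrecPred_mk_eq (snd.comp fst)
        (list_append.comp (fst.comp snd) (snd.comp snd))).of_eq fun _ => by rw [mul_mk]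
  · exact REPred.exists_of_primrecRel
      ((Primrec.eq.comp (fst.comp fst) (list_cons.comp snd (const []))).and
        ((primrecPred_mk_eq (snd.comp fst) (primrec_invRev.comp snd)).of_eq
          fun _ => by rw [inv_mk]))
  · exact REPred.exists_of_primrecRel
      ((Primrec.eq.comp (fst.comp fst) (list_cons.comp (fst.comp snd) (const []))).and
        ((primrecPred_mk_eq (snd.comp fst) (list_append.comp
          (list_append.comp (snd.comp snd) (fst.comp snd))
          (primrec_invRev.comp (snd.comp snd)))).of_eq
          fun _ => by rw [inv_mk, mul_mk, mul_mk]))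
  · exact REPred.exists ((hA.comp (Computable.snd.comp Computable.snd)).and (.of_primrecPred
      ((Primrec.eq.comp (fst.comp fst) (list_cons.comp (fst.comp snd) (const []))).and
        ((primrecPred_mk_eq (fst.comp snd) (hpow.comp ((snd.comp fst).pair (snd.comp snd)))).of_eq
          fun _ => by rw [pow_mk]))))

variable [DecidableEq α]

variable (R A) in
def kernelSubgroup : Subgroup (FreeGroup α) where
  carrier := {g | ∃ w, Derivable (KernelRule R A) w ∧ mk w = g}
  one_mem' := ⟨[], .intro (.one rfl) (by simp), rfl⟩
  mul_mem' := by
    rintro _ _ ⟨u, hu, rfl⟩ ⟨v, hv, rfl⟩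
    exact ⟨_, .intro (.mul (u := u) (v := v) mk_toWord) (by simp [hu, hv]), mk_toWord⟩
  inv_mem' := by
    rintro _ ⟨u, hu, rfl⟩
    exact ⟨_, .intro (.inv (u := u) mk_toWord) (by simp [hu]), mk_toWord⟩

instance : (kernelSubgroup R A).Normal where
  conj_mem := by
    rintro _ ⟨u, hu, rfl⟩ g
    exact ⟨_, .intro (.conj (u := u) g.toWord (by rw [mk_toWord, mk_toWord])) (by simp [hu]),
      mk_toWord⟩

theorem isRootClosed_kernelSubgroup : (kernelSubgroup R A).IsRootClosed A := by
  rintro g k hk ⟨u, hu, hgk⟩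
  exact ⟨_, .intro (.root (u := u) hk (by rw [hgk, mk_toWord])) (by simp [hu]), mk_toWord⟩

theorem mk_image_subset_kernelSubgroup : mk '' R ⊆ kernelSubgroup R A := by
  rintro _ ⟨w, hw, rfl⟩
  exact ⟨w, .intro (.rel hw) (by simp), rfl⟩

theorem kernelSubgroup_le {M : Subgroup (FreeGroup α)} [M.Normal] (hM : M.IsRootClosed A)
    (hR : ∀ w ∈ R, mk w ∈ M) : kernelSubgroup R A ≤ M := by
  rintro _ ⟨w, hw, rfl⟩
  induction hw with
  | intro hrule _ ih =>
    cases hrule with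
    | rel hw => exact hR _ hw
    | one h => exact h ▸ M.one_mem
    | mul h => exact h ▸ M.mul_mem (ih _ (by simp)) (ih _ (by simp))
    | inv h => exact h ▸ M.inv_mem (ih _ (by simp))
    | conj g h => exact h ▸ Normal.conj_mem inferInstance _ (ih _ (by simp)) _
    | root hk h => exact hM _ _ hk (h ▸ ih _ (by simp))

variable (R A) in
theorem kernelSubgroup_eq_ker : kernelSubgroup R A =
    ((QuotientGroup.mk' (torOmega A (PresentedGroup (mk '' R)))).comp
      (PresentedGroup.mk (mk '' R))).ker := by
  rw [← MonoidHom.comap_ker, QuotientGroup.ker_mk']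
  refine le_antisymm (kernelSubgroup_le (isRootClosed_torOmega.comap _) fun w hw => ?_)
    (comap_torOmega_le (PresentedGroup.mk_surjective _) isRootClosed_kernelSubgroup ?_)
  · rw [mem_comap, PresentedGroup.one_of_mem (Set.mem_image_of_mem mk hw)]
    exact one_mem _
  · intro x hx
    exact normalClosure_le_normal mk_image_subset_kernelSubgroup
      (PresentedGroup.mk_eq_one_iff.1 hx)

end FreeGroup

theorem universal_quotient_recursively_presented
    (R : Set (List (ℕ × Bool))) (hR : REPredOld (· ∈ R))
    (A : Set ℕ) (hA : REPredOld (· ∈ A)) :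
    ∃ R' : Set (List (ℕ × Bool)), REPredOld (· ∈ R') ∧ R ⊆ R' ∧
      Subgroup.normalClosure (FreeGroup.mk '' R') =
        ((QuotientGroup.mk' (torOmega A (PresentedGroup (FreeGroup.mk '' R)))).comp
          (PresentedGroup.mk (FreeGroup.mk '' R))).ker ∧
      Nonempty
        ((PresentedGroup (FreeGroup.mk '' R) ⧸
            torOmega A (PresentedGroup (FreeGroup.mk '' R))) ≃*
          PresentedGroup (FreeGroup.mk '' R')) := by
  have hker : normalClosure (FreeGroup.mk '' {w | Derivable (FreeGroup.KernelRule R A) w}) =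
      ((QuotientGroup.mk' (torOmega A (PresentedGroup (FreeGroup.mk '' R)))).comp
        (PresentedGroup.mk (FreeGroup.mk '' R))).ker :=
    (normalClosure_eq_self (FreeGroup.kernelSubgroup R A)).trans
      (FreeGroup.kernelSubgroup_eq_ker R A)
  refine ⟨{w | Derivable (FreeGroup.KernelRule R A) w},
    Derivable.rePred (FreeGroup.rePred_kernelRule hR hA), fun w hw => .intro (.rel hw) (by simp),
    hker, ⟨?_⟩⟩
  have hsurj := (QuotientGroup.mk'_surjective (torOmega A _)).comp
    (PresentedGroup.mk_surjective (FreeGroup.mk '' R))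
  exact ((QuotientGroup.quotientMulEquivOfEq hker).trans
    (QuotientGroup.quotientKerEquivOfSurjective _ hsurj)).symm
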